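/- arXiv:2410.10718 — 3 statements merged into one kernel-verified Lean document; each statement's English description precedes it below -/
import Mathlib

section
/- Let G_2 be the resolvent of a Hermitian N×N matrix at spectral parameter z_2, and let S, T be positive semidefinite Hermitian N×N matrices. Then |⟨G_2 S G_2* T⟩| ≲ N ⟨|G_2| S⟩ ⟨|G_2| T⟩, where ⟨·⟩ denotes the normalized trace and |G_2| = (G_2 G_2*)^{1/2}. -/
open Matrix
open scoped ComplexOrder

/-!
Diagonalise `H = U D U*`. Then `G = (H - z)⁻¹ = U diag(d) U*` and `|G| = U diag(|d|) U*`, so after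
conjugating `S` and `T` by `U` (which keeps them positive semidefinite) the claim, with constant 1
and `s_i = S_ii`, `t_i = T_ii`, becomes
`|∑_{i,j} d_i S_ij conj(d_j) T_ji| ≤ (∑_i |d_i| s_i) (∑_i |d_i| t_i)`.
The `2 × 2` principal minors of `S` and `T` give `|S_ij|² ≤ s_i s_j` and `|T_ji|² ≤ t_i t_j`, hence
`|S_ij| |T_ji| ≤ (s_i t_j + s_j t_i) / 2` by AM-GM, and summing this against `|d_i| |d_j|` yields
exactly the right-hand side.
-/

/-- The normalized trace `⟨A⟩ = N⁻¹ Tr A`. -/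
noncomputable def ntr {N : ℕ} (A : Matrix (Fin N) (Fin N) ℂ) : ℂ :=
  (N : ℂ)⁻¹ * A.trace

/-- The positive semidefinite square root of a positive semidefinite matrix
(restored: removed from Mathlib; same definition as in the older library). -/
noncomputable def Matrix.PosSemidef.sqrt {n 𝕜 : Type*} [Fintype n] [DecidableEq n] [RCLike 𝕜]
    {A : Matrix n n 𝕜} (hA : A.PosSemidef) : Matrix n n 𝕜 :=
  (hA.1.eigenvectorUnitary : Matrix n n 𝕜) *
    diagonal (fun i => ((Real.sqrt (hA.1.eigenvalues i) : ℝ) : 𝕜)) *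
    (star hA.1.eigenvectorUnitary : Matrix n n 𝕜)

namespace Matrix.PosSemidef
variable {n 𝕜 : Type*} [RCLike 𝕜] {M S T : Matrix n n 𝕜}

lemma ofReal_norm_diag (hM : M.PosSemidef) (i : n) : (‖M i i‖ : 𝕜) = M i i :=
  RCLike.norm_of_nonneg' hM.diag_nonneg

lemma norm_apply_sq_le (hM : M.PosSemidef) (i j : n) :
    ‖M i j‖ ^ 2 ≤ ‖M i i‖ * ‖M j j‖ := by
  have hdet := (hM.submatrix ![i, j]).det_nonneg
  simp only [det_fin_two, submatrix_apply, cons_val_zero, cons_val_one, sub_nonneg] at hdet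
  rw [← hM.1.apply j i, RCLike.star_def, RCLike.mul_conj, ← hM.ofReal_norm_diag i,
    ← hM.ofReal_norm_diag j] at hdet
  exact_mod_cast hdet

lemma norm_apply_mul_norm_apply_le (hS : S.PosSemidef) (hT : T.PosSemidef) (i j : n) :
    ‖S i j‖ * ‖T j i‖ ≤ (‖S i i‖ * ‖T j j‖ + ‖S j j‖ * ‖T i i‖) / 2 := by
  have h : (‖S i j‖ * ‖T j i‖) ^ 2 ≤ (‖S i i‖ * ‖S j j‖) * (‖T j j‖ * ‖T i i‖) := by
    rw [mul_pow]
    exact mul_le_mul (hS.norm_apply_sq_le i j) (hT.norm_apply_sq_le j i) (sq_nonneg _)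
      (mul_nonneg (norm_nonneg _) (norm_nonneg _))
  nlinarith [sq_nonneg (‖S i i‖ * ‖T j j‖ - ‖S j j‖ * ‖T i i‖),
    mul_nonneg (norm_nonneg (S i j)) (norm_nonneg (T j i)),
    mul_nonneg (norm_nonneg (S i i)) (norm_nonneg (T j j)),
    mul_nonneg (norm_nonneg (S j j)) (norm_nonneg (T i i))]

variable [Fintype n] [DecidableEq n]

lemma norm_trace_diagonal_mul_mul_le (hS : S.PosSemidef) (hT : T.PosSemidef) (d : n → 𝕜) :
    ‖trace (diagonal d * S * diagonal (star d) * T)‖ ≤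
      (∑ i, ‖d i‖ * ‖S i i‖) * ∑ i, ‖d i‖ * ‖T i i‖ := by
  set a := fun i => ‖d i‖ * ‖S i i‖
  set b := fun i => ‖d i‖ * ‖T i i‖
  calc ‖trace (diagonal d * S * diagonal (star d) * T)‖
      = ‖∑ i, ∑ j, d i * S i j * star (d j) * T j i‖ := by
        simp only [trace, diag_apply, mul_apply, diagonal_apply, ite_mul, mul_ite, zero_mul,
          mul_zero, Finset.sum_ite_eq, Finset.sum_ite_eq', Finset.mem_univ, if_true, Pi.star_apply]
    _ ≤ ∑ i, ∑ j, ‖d i‖ * ‖d j‖ * (‖S i j‖ * ‖T j i‖) := by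
        refine (norm_sum_le _ _).trans (Finset.sum_le_sum fun i _ => ?_)
        refine (norm_sum_le _ _).trans_eq (Finset.sum_congr rfl fun j _ => ?_)
        simp only [norm_mul, norm_star]
        ring
    _ ≤ ∑ i, ∑ j, (a i * b j + a j * b i) / 2 := by
        gcongr with i _ j _
        calc _ ≤ ‖d i‖ * ‖d j‖ * ((‖S i i‖ * ‖T j j‖ + ‖S j j‖ * ‖T i i‖) / 2) := by
              gcongr; exact hS.norm_apply_mul_norm_apply_le hT i j
          _ = _ := by ring
    _ = (∑ i, a i) * ∑ i, b i := by
        simp only [add_div, Finset.sum_add_distrib, Finset.sum_mul_sum]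
        rw [Finset.sum_comm (f := fun i j => a j * b i / 2), ← Finset.sum_add_distrib]
        simp only [← Finset.sum_add_distrib, add_halves]

lemma norm_trace_diagonal_ofReal_mul (hS : S.PosSemidef) {g : n → ℝ} (hg : 0 ≤ g) :
    ‖trace (diagonal (fun i => (g i : 𝕜)) * S)‖ = ∑ i, g i * ‖S i i‖ := by
  have : trace (diagonal (fun i => (g i : 𝕜)) * S) = ((∑ i, g i * ‖S i i‖ : ℝ) : 𝕜) := by
    simp only [trace, diag_apply, diagonal_mul, RCLike.ofReal_sum, RCLike.ofReal_mul,
      hS.ofReal_norm_diag]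
  rw [this, RCLike.norm_of_nonneg (Finset.sum_nonneg fun i _ => mul_nonneg (hg i) (norm_nonneg _))]

end Matrix.PosSemidef

namespace Matrix

open Unitary

variable {n 𝕜 : Type*} [Fintype n] [DecidableEq n] [RCLike 𝕜]

open scoped MatrixOrder in
lemma PosSemidef.sqrt_eq_of_sq_eq {A Q : Matrix n n 𝕜} (hA : A.PosSemidef) (hQ : Q.PosSemidef)
    (h : Q ^ 2 = A) : hA.sqrt = Q := by
  have e : hA.sqrt = CFC.sqrt A := by
    rw [CFC.sqrt_eq_cfc, cfc_nnreal_eq_real _ A hA.nonneg, hA.1.cfc_eq]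
    simp only [PosSemidef.sqrt, IsHermitian.cfc, conjStarAlgAut_apply]
    congr 2
    ext i j
    simp [diagonal_apply, max_eq_left (hA.eigenvalues_nonneg i)]
  rw [e]
  exact CFC.sqrt_unique (by rw [← h, sq]) hQ.nonneg

lemma trace_conjStarAlgAut (U : unitaryGroup n 𝕜) (A : Matrix n n 𝕜) :
    trace (conjStarAlgAut 𝕜 _ U A) = trace A := by
  rw [conjStarAlgAut_apply, trace_mul_cycle, coe_star_mul_self, one_mul]

lemma trace_conjStarAlgAut_mul (U : unitaryGroup n 𝕜) (A B : Matrix n n 𝕜) :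
    trace (conjStarAlgAut 𝕜 _ U A * B) =
      trace (A * (conjStarAlgAut 𝕜 _ U).symm B) := by
  rw [← trace_conjStarAlgAut U (A * _), map_mul, StarAlgEquiv.apply_symm_apply]

lemma inv_conjStarAlgAut_diagonal (U : unitaryGroup n 𝕜) {d : n → 𝕜} (hd : ∀ i, d i ≠ 0) :
    (conjStarAlgAut 𝕜 _ U (diagonal d))⁻¹ = conjStarAlgAut 𝕜 _ U (diagonal d⁻¹) := by
  refine inv_eq_right_inv ?_
  rw [← map_mul, diagonal_mul_diagonal]
  simp [hd]

lemma sqrt_self_mul_conjTranspose_conjStarAlgAut_diagonal (U : unitaryGroup n 𝕜) (d : n → 𝕜) :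
    (posSemidef_self_mul_conjTranspose (conjStarAlgAut 𝕜 _ U (diagonal d))).sqrt =
      conjStarAlgAut 𝕜 _ U (diagonal fun i => (‖d i‖ : 𝕜)) := by
  refine PosSemidef.sqrt_eq_of_sq_eq _ ?_ ?_
  · rw [conjStarAlgAut_apply, star_eq_conjTranspose]
    exact (posSemidef_diagonal_iff.2 fun i => RCLike.ofReal_nonneg.2 (norm_nonneg _))
      |>.mul_mul_conjTranspose_same _
  · rw [← star_eq_conjTranspose, ← map_star, ← map_pow, ← map_mul, star_eq_conjTranspose,
      diagonal_conjTranspose, diagonal_pow, diagonal_mul_diagonal]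
    congr 2
    ext i
    simp [RCLike.mul_conj]

lemma IsHermitian.inv_sub_smul_one_eq {H : Matrix n n 𝕜} (hH : H.IsHermitian) {z : 𝕜}
    (hz : ∀ i, (hH.eigenvalues i : 𝕜) ≠ z) :
    (H - z • 1)⁻¹ = conjStarAlgAut 𝕜 _ hH.eigenvectorUnitary
      (diagonal fun i => ((hH.eigenvalues i : 𝕜) - z)⁻¹) := by
  have h : H - z • 1 = conjStarAlgAut 𝕜 _ hH.eigenvectorUnitary
      (diagonal fun i => (hH.eigenvalues i : 𝕜) - z) := by
    conv_lhs => rw [hH.spectral_theorem]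
    rw [← map_one (conjStarAlgAut 𝕜 _ hH.eigenvectorUnitary), ← map_smul, ← map_sub,
      smul_one_eq_diagonal, diagonal_sub]
    rfl
  rw [h, inv_conjStarAlgAut_diagonal _ fun i => sub_ne_zero.2 (hz i)]
  rfl

theorem norm_trace_mul_mul_conjTranspose_mul_le {G : Matrix n n 𝕜} (U : unitaryGroup n 𝕜)
    (d : n → 𝕜) (hG : G = conjStarAlgAut 𝕜 _ U (diagonal d))
    {S T : Matrix n n 𝕜} (hS : S.PosSemidef) (hT : T.PosSemidef) :
    ‖trace (G * S * Gᴴ * T)‖ ≤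
      ‖trace ((posSemidef_self_mul_conjTranspose G).sqrt * S)‖ *
        ‖trace ((posSemidef_self_mul_conjTranspose G).sqrt * T)‖ := by
  subst hG
  set φ := conjStarAlgAut 𝕜 (Matrix n n 𝕜) U
  have hconj : φ (diagonal d) * S * (φ (diagonal d))ᴴ =
      φ (diagonal d * φ.symm S * diagonal (star d)) := by
    rw [← star_eq_conjTranspose, ← map_star, map_mul, map_mul, StarAlgEquiv.apply_symm_apply,
      star_eq_conjTranspose, diagonal_conjTranspose]
  have hφS : (φ.symm S).PosSemidef := hS.conjTranspose_mul_mul_same _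
  have hφT : (φ.symm T).PosSemidef := hT.conjTranspose_mul_mul_same _
  rw [sqrt_self_mul_conjTranspose_conjStarAlgAut_diagonal, trace_conjStarAlgAut_mul,
    trace_conjStarAlgAut_mul, hconj, trace_conjStarAlgAut_mul,
    hφS.norm_trace_diagonal_ofReal_mul fun i => norm_nonneg (d i),
    hφT.norm_trace_diagonal_ofReal_mul fun i => norm_nonneg (d i)]
  exact hφS.norm_trace_diagonal_mul_mul_le hφT d

end Matrix

lemma norm_ntr {N : ℕ} (A : Matrix (Fin N) (Fin N) ℂ) : ‖ntr A‖ = (N : ℝ)⁻¹ * ‖A.trace‖ := by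
  rw [ntr, norm_mul, norm_inv, Complex.norm_natCast]

/-- Reduction inequality: for the resolvent `G₂` of a Hermitian matrix and positive
semidefinite `S, T`, one has `|⟨G₂ S G₂* T⟩| ≲ N ⟨|G₂| S⟩ ⟨|G₂| T⟩`, with an absolute
implicit constant, where `|G₂| = (G₂G₂*)^{1/2}`. -/
theorem stmt_8 :
    ∃ C : ℝ, 0 < C ∧
      ∀ (N : ℕ) (H : Matrix (Fin N) (Fin N) ℂ), H.IsHermitian →
        ∀ z₂ : ℂ, z₂.im ≠ 0 →
          ∀ S T : Matrix (Fin N) (Fin N) ℂ, S.PosSemidef → T.PosSemidef →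
            ‖ntr ((H - z₂ • 1)⁻¹ * S * ((H - z₂ • 1)⁻¹)ᴴ * T)‖ ≤
              C * N *
                ‖ntr
                  ((Matrix.posSemidef_self_mul_conjTranspose (H - z₂ • 1)⁻¹).sqrt * S)‖ *
                ‖ntr
                  ((Matrix.posSemidef_self_mul_conjTranspose (H - z₂ • 1)⁻¹).sqrt * T)‖ := by
  refine ⟨1, one_pos, fun N H hH z₂ hz S T hS hT => ?_⟩
  have key := norm_trace_mul_mul_conjTranspose_mul_le hH.eigenvectorUnitary _
    (hH.inv_sub_smul_one_eq (z := z₂) fun i h => hz (by rw [← h]; simp)) hS hT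
  simp only [norm_ntr]
  rcases Nat.eq_zero_or_pos N with rfl | hN
  · simp
  · exact (mul_le_mul_of_nonneg_left key (by positivity)).trans_eq (by field_simp)
end

section
/- Let M_1, M_2 be solutions of the Matrix Dyson Equations -M_1^{-1} = z_1 - D_1 + ⟨M_1⟩ and -M_2^{-1} = z_2 - D_2 + ⟨M_2⟩, with ⟨M_1 M_2⟩ ≠ 1. Then z_1 - z_2 - ⟨M_1(D_1 - D_2)M_2⟩/⟨M_1 M_2⟩ = (1 - ⟨M_1 M_2⟩)(⟨M_1⟩ - ⟨M_2⟩)/⟨M_1 M_2⟩, provided ⟨M_1 M_2⟩ ≠ 0. -/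
/-!
Subtracting the two Dyson equations gives
`D₁ - D₂ = (z₁ + ⟨M₁⟩ - z₂ - ⟨M₂⟩) + M₁⁻¹ - M₂⁻¹`; sandwiching between `M₁` and `M₂` turns
`M₁ (M₁⁻¹ - M₂⁻¹) M₂` into `M₂ - M₁`, and taking the normalized trace leaves a scalar identity
that is solved for `z₁ - z₂`.
-/

open Matrix

section NormalizedTrace

variable {N : ℕ}

lemma ntr_add (A B : Matrix (Fin N) (Fin N) ℂ) : ntr (A + B) = ntr A + ntr B := by
  simp only [ntr, trace_add, mul_add]

lemma ntr_sub (A B : Matrix (Fin N) (Fin N) ℂ) : ntr (A - B) = ntr A - ntr B := by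
  simp only [ntr, trace_sub, mul_sub]

lemma ntr_smul (c : ℂ) (A : Matrix (Fin N) (Fin N) ℂ) : ntr (c • A) = c * ntr A := by
  simp only [ntr, trace_smul, smul_eq_mul]
  ring

end NormalizedTrace

namespace Matrix

variable {n α : Type*} [Fintype n] [DecidableEq n] [CommRing α]

theorem mul_inv_sub_inv_mul {A B : Matrix n n α} (hA : IsUnit A.det) (hB : IsUnit B.det) :
    A * (A⁻¹ - B⁻¹) * B = B - A := by
  rw [Matrix.mul_sub, mul_nonsing_inv _ hA, Matrix.sub_mul, Matrix.one_mul, Matrix.mul_assoc,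
    nonsing_inv_mul _ hB, Matrix.mul_one]

theorem mul_sub_mul_of_neg_inv_eq {M₁ M₂ D₁ D₂ : Matrix n n α} {c₁ c₂ : α}
    (hM₁ : IsUnit M₁.det) (hM₂ : IsUnit M₂.det)
    (h₁ : -M₁⁻¹ = c₁ • 1 - D₁) (h₂ : -M₂⁻¹ = c₂ • 1 - D₂) :
    M₁ * (D₁ - D₂) * M₂ = (c₁ - c₂) • (M₁ * M₂) + M₂ - M₁ := by
  have hD : D₁ - D₂ = (c₁ - c₂) • (1 : Matrix n n α) + (M₁⁻¹ - M₂⁻¹) := by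
    rw [sub_smul]
    linear_combination (norm := module) h₁ - h₂
  rw [hD, Matrix.mul_add, Matrix.add_mul, Matrix.mul_smul, Matrix.smul_mul, Matrix.mul_one,
    mul_inv_sub_inv_mul hM₁ hM₂, add_sub_assoc]

end Matrix

theorem stmt_10_general {N : ℕ}
    (M₁ M₂ D₁ D₂ : Matrix (Fin N) (Fin N) ℂ) (z₁ z₂ : ℂ)
    (hM₁inv : IsUnit M₁.det) (hM₂inv : IsUnit M₂.det)
    (hMDE₁ : -M₁⁻¹ = z₁ • (1 : Matrix (Fin N) (Fin N) ℂ) - D₁ +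
      ntr M₁ • (1 : Matrix (Fin N) (Fin N) ℂ))
    (hMDE₂ : -M₂⁻¹ = z₂ • (1 : Matrix (Fin N) (Fin N) ℂ) - D₂ +
      ntr M₂ • (1 : Matrix (Fin N) (Fin N) ℂ))
    (h0 : ntr (M₁ * M₂) ≠ 0) :
    z₁ - z₂ - ntr (M₁ * (D₁ - D₂) * M₂) / ntr (M₁ * M₂) =
      (1 - ntr (M₁ * M₂)) * (ntr M₁ - ntr M₂) / ntr (M₁ * M₂) := by
  have hsandwich : M₁ * (D₁ - D₂) * M₂ =
      (z₁ + ntr M₁ - (z₂ + ntr M₂)) • (M₁ * M₂) + M₂ - M₁ :=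
    mul_sub_mul_of_neg_inv_eq hM₁inv hM₂inv (by rw [hMDE₁]; module) (by rw [hMDE₂]; module)
  rw [hsandwich, ntr_sub, ntr_add, ntr_smul]
  field_simp
  ring

/-- For solutions `M₁, M₂` of the Matrix Dyson Equations
`-Mⱼ⁻¹ = zⱼ - Dⱼ + ⟨Mⱼ⟩`, with `⟨M₁M₂⟩ ∉ {0,1}`, one has
`z₁ - z₂ - ⟨M₁(D₁-D₂)M₂⟩/⟨M₁M₂⟩ = (1 - ⟨M₁M₂⟩)(⟨M₁⟩ - ⟨M₂⟩)/⟨M₁M₂⟩`. -/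
theorem stmt_10 {N : ℕ} (hN : 0 < N)
    (M₁ M₂ D₁ D₂ : Matrix (Fin N) (Fin N) ℂ) (z₁ z₂ : ℂ)
    (hM₁inv : IsUnit M₁.det) (hM₂inv : IsUnit M₂.det)
    (hMDE₁ : -M₁⁻¹ = z₁ • (1 : Matrix (Fin N) (Fin N) ℂ) - D₁ +
      ntr M₁ • (1 : Matrix (Fin N) (Fin N) ℂ))
    (hMDE₂ : -M₂⁻¹ = z₂ • (1 : Matrix (Fin N) (Fin N) ℂ) - D₂ +
      ntr M₂ • (1 : Matrix (Fin N) (Fin N) ℂ))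
    (h1 : ntr (M₁ * M₂) ≠ 1) (h0 : ntr (M₁ * M₂) ≠ 0) :
    z₁ - z₂ - ntr (M₁ * (D₁ - D₂) * M₂) / ntr (M₁ * M₂) =
      (1 - ntr (M₁ * M₂)) * (ntr M₁ - ntr M₂) / ntr (M₁ * M₂) :=
  stmt_10_general M₁ M₂ D₁ D₂ z₁ z₂ hM₁inv hM₂inv hMDE₁ hMDE₂ h0
end

section
/- Let M_1, M_2 be solutions of the MDE at spectral parameters z_1, z_2 respectively (with deformations D_1, D_2). Then M_1(z_1) - M_2(z_2) = [(z_1 - z_2 - ⟨M_1(D_1-D_2)M_2⟩)/(1 - ⟨M_1M_2⟩)] M_1 M_2 - M_1(D_1 - D_2)M_2, provided ⟨M_1 M_2⟩ ≠ 1. -/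
/-!
Subtracting the two equations gives `M₂⁻¹ - M₁⁻¹ = (z₁ - z₂ + ⟨M₁ - M₂⟩) - (D₁ - D₂)`, so
`X := M₁ - M₂ = M₁ (M₂⁻¹ - M₁⁻¹) M₂` satisfies the self-consistent equation
`X = (z₁ - z₂ + ⟨X⟩) M₁M₂ - M₁(D₁ - D₂)M₂`. Taking the normalized trace yields a scalar linear
equation for `⟨X⟩`, solvable exactly when `⟨M₁M₂⟩ ≠ 1`.
-/

open Matrix

theorem LinearMap.add_apply_eq_div_of_eq_smul_sub {K V : Type*} [Field K] [AddCommGroup V]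
    [Module K V] (f : V →ₗ[K] K) {X P Q : V} {w : K} (hX : X = (w + f X) • P - Q)
    (hP : f P ≠ 1) : w + f X = (w - f Q) / (1 - f P) := by
  have hfX : f X = (w + f X) * f P - f Q := by
    conv_lhs => rw [hX]
    rw [map_sub, map_smul, smul_eq_mul]
  rw [eq_div_iff (sub_ne_zero.mpr hP.symm)]
  linear_combination hfX

noncomputable def ntrLinearMap (N : ℕ) : Matrix (Fin N) (Fin N) ℂ →ₗ[ℂ] ℂ :=
  (N : ℂ)⁻¹ • traceLinearMap (Fin N) ℂ ℂ

@[simp]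
theorem ntrLinearMap_apply {N : ℕ} (A : Matrix (Fin N) (Fin N) ℂ) :
    ntrLinearMap N A = ntr A :=
  rfl

theorem inv_sub_inv_of_mde {N : ℕ} {M₁ M₂ D₁ D₂ : Matrix (Fin N) (Fin N) ℂ} {z₁ z₂ : ℂ}
    (hMDE₁ : -M₁⁻¹ = z₁ • (1 : Matrix (Fin N) (Fin N) ℂ) - D₁ + ntr M₁ • 1)
    (hMDE₂ : -M₂⁻¹ = z₂ • (1 : Matrix (Fin N) (Fin N) ℂ) - D₂ + ntr M₂ • 1) :
    M₂⁻¹ - M₁⁻¹ = (z₁ - z₂ + ntr (M₁ - M₂)) • 1 - (D₁ - D₂) := by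
  rw [← neg_sub_neg, hMDE₁, hMDE₂, ← ntrLinearMap_apply (M₁ - M₂), map_sub]
  simp only [ntrLinearMap_apply]
  module

theorem Matrix.sub_eq_mul_inv_sub_inv_mul {n α : Type*} [Fintype n] [DecidableEq n] [CommRing α]
    {A B : Matrix n n α} (hA : IsUnit A.det) (hB : IsUnit B.det) :
    A - B = A * (B⁻¹ - A⁻¹) * B := by
  have hA' : IsUnit A⁻¹ := (isUnit_iff_isUnit_det _).mpr (isUnit_nonsing_inv_det A hA)
  have hB' : IsUnit B⁻¹ := (isUnit_iff_isUnit_det _).mpr (isUnit_nonsing_inv_det B hB)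
  simpa only [nonsing_inv_nonsing_inv A hA, nonsing_inv_nonsing_inv B hB] using
    inv_sub_inv (A := A⁻¹) (B := B⁻¹) (iff_of_true hA' hB')

theorem stmt_11_general {N : ℕ}
    (M₁ M₂ D₁ D₂ : Matrix (Fin N) (Fin N) ℂ) (z₁ z₂ : ℂ)
    (hM₁inv : IsUnit M₁.det) (hM₂inv : IsUnit M₂.det)
    (hMDE₁ : -M₁⁻¹ = z₁ • (1 : Matrix (Fin N) (Fin N) ℂ) - D₁ +
      ntr M₁ • (1 : Matrix (Fin N) (Fin N) ℂ))
    (hMDE₂ : -M₂⁻¹ = z₂ • (1 : Matrix (Fin N) (Fin N) ℂ) - D₂ +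
      ntr M₂ • (1 : Matrix (Fin N) (Fin N) ℂ))
    (h1 : ntr (M₁ * M₂) ≠ 1) :
    M₁ - M₂ =
      ((z₁ - z₂ - ntr (M₁ * (D₁ - D₂) * M₂)) / (1 - ntr (M₁ * M₂))) • (M₁ * M₂) -
        M₁ * (D₁ - D₂) * M₂ := by
  have hself : M₁ - M₂ = (z₁ - z₂ + ntr (M₁ - M₂)) • (M₁ * M₂) - M₁ * (D₁ - D₂) * M₂ :=
    calc M₁ - M₂ = M₁ * (M₂⁻¹ - M₁⁻¹) * M₂ := sub_eq_mul_inv_sub_inv_mul hM₁inv hM₂inv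
      _ = _ := by
        rw [inv_sub_inv_of_mde hMDE₁ hMDE₂]
        simp only [mul_sub, sub_mul, mul_smul_comm, smul_mul_assoc, mul_one]
  have hcoef := (ntrLinearMap N).add_apply_eq_div_of_eq_smul_sub
    (w := z₁ - z₂) (by simpa only [ntrLinearMap_apply] using hself)
    (by simpa only [ntrLinearMap_apply] using h1)
  simp only [ntrLinearMap_apply] at hcoef
  rwa [hcoef] at hself

/-- For solutions `M₁, M₂` of the MDEs `-Mⱼ⁻¹ = zⱼ - Dⱼ + ⟨Mⱼ⟩`, with `⟨M₁M₂⟩ ≠ 1`: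
`M₁ - M₂ = [(z₁ - z₂ - ⟨M₁(D₁-D₂)M₂⟩)/(1 - ⟨M₁M₂⟩)] M₁M₂ - M₁(D₁-D₂)M₂`. -/
theorem stmt_11 {N : ℕ} (hN : 0 < N)
    (M₁ M₂ D₁ D₂ : Matrix (Fin N) (Fin N) ℂ) (z₁ z₂ : ℂ)
    (hM₁inv : IsUnit M₁.det) (hM₂inv : IsUnit M₂.det)
    (hMDE₁ : -M₁⁻¹ = z₁ • (1 : Matrix (Fin N) (Fin N) ℂ) - D₁ +
      ntr M₁ • (1 : Matrix (Fin N) (Fin N) ℂ))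
    (hMDE₂ : -M₂⁻¹ = z₂ • (1 : Matrix (Fin N) (Fin N) ℂ) - D₂ +
      ntr M₂ • (1 : Matrix (Fin N) (Fin N) ℂ))
    (h1 : ntr (M₁ * M₂) ≠ 1) :
    M₁ - M₂ =
      ((z₁ - z₂ - ntr (M₁ * (D₁ - D₂) * M₂)) / (1 - ntr (M₁ * M₂))) • (M₁ * M₂) -
        M₁ * (D₁ - D₂) * M₂ :=
  stmt_11_general M₁ M₂ D₁ D₂ z₁ z₂ hM₁inv hM₂inv hMDE₁ hMDE₂ h1
end
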